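/- For any probability measure D on X×Y and any probability measure Q on H, the first and second moments of the margin satisfy the identities E_{(x,y)~D}[ y · E_{h~Q}[h(x)] ] = 1 − 2·r_D(Q) and E_{x~D_X}[ (E_{h~Q}[h(x)])² ] = 1 − 2·d_D(Q); in particular d_D(Q) ≤ 1/2, and if r_D(Q) < 1/2 then d_D(Q) < 1/2. -/

import Mathlib

open MeasureTheory

variable {X H : Type*} [MeasurableSpace X] [MeasurableSpace H]

/-- Gibbs risk: `r_D(Q) = E_{h~Q} P_{(x,y)~D}[h(x) ≠ y]`. -/
noncomputable def gibbsRisk (D : Measure (X × ℝ)) (Q : Measure H) (f : H → X → ℝ) : ℝ :=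
  ∫ h, (D {p | f h p.1 ≠ p.2}).toReal ∂Q

/-- Expected disagreement: `d_D(Q) = E_{h1~Q} E_{h2~Q} P_{x~D_X}[h1(x) ≠ h2(x)]`. -/
noncomputable def disagreement (D : Measure (X × ℝ)) (Q : Measure H) (f : H → X → ℝ) : ℝ :=
  ∫ h₁, ∫ h₂, ((D.map Prod.fst) {x | f h₁ x ≠ f h₂ x}).toReal ∂Q ∂Q

/-- Expected joint error: `e_D(Q) = E_{h1~Q} E_{h2~Q} P_{(x,y)~D}[h1(x) ≠ y ∧ h2(x) ≠ y]`. -/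
noncomputable def jointError (D : Measure (X × ℝ)) (Q : Measure H) (f : H → X → ℝ) : ℝ :=
  ∫ h₁, ∫ h₂, (D {p | f h₁ p.1 ≠ p.2 ∧ f h₂ p.1 ≠ p.2}).toReal ∂Q ∂Q

/-!
Writing `1 - 2·𝟙[a ≠ b] = a·b` for signs `a, b`, the Gibbs risk and the disagreement become
correlations: `1 - 2 r_D(Q) = E_Q E_D[y h(x)]` and `1 - 2 d_D(Q) = E_Q E_Q E_D[h₁(x) h₂(x)]`,
and Fubini moves the `Q`-integrals inside, producing `E_D[y M_Q(x)]` and `E_D[M_Q(x)²]`.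
The second moment is nonnegative and, since `y² = 1`, dominates the square of the first
(the variance of `y M_Q(x)` is nonnegative), so `0 < 1 - 2 r_D(Q)` forces `0 < 1 - 2 d_D(Q)`.
-/

section Integral

variable {α : Type*} [MeasurableSpace α] {μ : Measure α}

lemma integral_one_sub_two_mul [IsProbabilityMeasure μ] {φ : α → ℝ} (hφ : Integrable φ μ) :
    ∫ a, 1 - 2 * φ a ∂μ = 1 - 2 * ∫ a, φ a ∂μ := by
  rw [integral_sub (integrable_const 1) (hφ.const_mul 2), integral_const_mul]
  simp

lemma integral_mul_eq_one_sub_two_measureReal_ne [IsProbabilityMeasure μ] {g₁ g₂ : α → ℝ}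
    (hg₁ : Measurable g₁) (hg₂ : Measurable g₂)
    (hv₁ : ∀ᵐ a ∂μ, g₁ a = 1 ∨ g₁ a = -1) (hv₂ : ∀ᵐ a ∂μ, g₂ a = 1 ∨ g₂ a = -1) :
    ∫ a, g₁ a * g₂ a ∂μ = 1 - 2 * μ.real {a | g₁ a ≠ g₂ a} := by
  have hs : MeasurableSet {a | g₁ a ≠ g₂ a} := (measurableSet_eq_fun hg₁ hg₂).compl
  have hsign : ∀ᵐ a ∂μ, g₁ a * g₂ a = 1 - 2 * {a | g₁ a ≠ g₂ a}.indicator 1 a := by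
    filter_upwards [hv₁, hv₂] with a h₁ h₂
    rcases h₁ with h₁ | h₁ <;> rcases h₂ with h₂ | h₂ <;> norm_num [Set.indicator, h₁, h₂]
  rw [integral_congr_ae hsign,
    integral_one_sub_two_mul (φ := {a | g₁ a ≠ g₂ a}.indicator 1)
      ((integrable_const 1).indicator hs),
    integral_indicator_one hs]

lemma integrable_measureReal_prodMk_left {β : Type*} [MeasurableSpace β] [IsFiniteMeasure μ]
    {ν : Measure β} [IsFiniteMeasure ν] {s : Set (α × β)} (hs : MeasurableSet s) :
    Integrable (fun a => ν.real (Prod.mk a ⁻¹' s)) μ := by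
  refine .of_bound (measurable_measure_prodMk_left hs).ennreal_toReal.aestronglyMeasurable
    (ν.real Set.univ) (ae_of_all _ fun a => ?_)
  rw [Real.norm_of_nonneg measureReal_nonneg]
  exact measureReal_mono (Set.subset_univ _)

lemma abs_integral_le_one [IsProbabilityMeasure μ] {φ : α → ℝ} (hφ : ∀ᵐ a ∂μ, |φ a| ≤ 1) :
    |∫ a, φ a ∂μ| ≤ 1 := by
  have h := norm_integral_le_of_norm_le_const (μ := μ) (f := φ) (C := 1) (by simpa using hφ)
  rwa [probReal_univ, mul_one, Real.norm_eq_abs] at h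

lemma integral_mul_integral_eq_integral_integral_mul {β : Type*} [MeasurableSpace β]
    [IsFiniteMeasure μ] {ν : Measure β} [IsFiniteMeasure ν] {F : β → α → ℝ} {g : α → ℝ}
    (hF : Measurable (Function.uncurry F)) (hg : Measurable g) {C C' : ℝ}
    (hFC : ∀ b a, |F b a| ≤ C) (hgC : ∀ᵐ a ∂μ, |g a| ≤ C') :
    ∫ a, g a * ∫ b, F b a ∂ν ∂μ = ∫ b, ∫ a, g a * F b a ∂μ ∂ν := by
  have hint : Integrable (Function.uncurry fun a b => g a * F b a) (μ.prod ν) := by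
    refine .of_bound ((hg.comp measurable_fst).mul (hF.comp measurable_swap)).aestronglyMeasurable
      (C' * C) ?_
    filter_upwards [Measure.quasiMeasurePreserving_fst.ae hgC] with z hz
    rw [Real.norm_eq_abs, Function.uncurry_apply_pair, abs_mul]
    exact mul_le_mul hz (hFC _ _) (abs_nonneg _) ((abs_nonneg _).trans hz)
  simp_rw [← integral_const_mul]
  exact integral_integral_swap hint

lemma sq_integral_le_integral_sq [IsProbabilityMeasure μ] {g : α → ℝ} (hg : MemLp g 2 μ) :
    (∫ a, g a ∂μ) ^ 2 ≤ ∫ a, g a ^ 2 ∂μ := by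
  have hvar := ProbabilityTheory.variance_nonneg g μ
  rw [ProbabilityTheory.variance_eq_sub hg] at hvar
  simpa [sub_nonneg] using hvar

end Integral

lemma abs_le_one_of_eq_one_or_eq_neg_one {a : ℝ} (ha : a = 1 ∨ a = -1) : |a| ≤ 1 := by
  rcases ha with rfl | rfl <;> simp

noncomputable def margin (Q : Measure H) (f : H → X → ℝ) (x : X) : ℝ :=
  ∫ h, f h x ∂Q

section Margin

variable (Q : Measure H) [IsProbabilityMeasure Q] {f : H → X → ℝ}

lemma measurable_margin (hf : Measurable (Function.uncurry f)) : Measurable (margin Q f) :=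
  hf.stronglyMeasurable.integral_prod_left.measurable

lemma integral_label_mul_margin (D : Measure (X × ℝ)) [IsProbabilityMeasure D]
    (hf : Measurable (Function.uncurry f)) (hvals : ∀ h x, f h x = 1 ∨ f h x = -1)
    (hlabels : ∀ᵐ p ∂D, p.2 = 1 ∨ p.2 = -1) :
    ∫ p, p.2 * margin Q f p.1 ∂D = 1 - 2 * gibbsRisk D Q f := by
  have hf' : Measurable fun q : H × (X × ℝ) => f q.1 q.2.1 :=
    hf.comp (measurable_fst.prodMk (measurable_fst.comp measurable_snd))
  have hcorr : ∀ h, ∫ p, p.2 * f h p.1 ∂D = 1 - 2 * D.real {p | f h p.1 ≠ p.2} := fun h => by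
    simp_rw [mul_comm _ (f _ _)]
    exact integral_mul_eq_one_sub_two_measureReal_ne (hf'.comp measurable_prodMk_left)
      measurable_snd (ae_of_all _ fun p => hvals h p.1) hlabels
  calc ∫ p, p.2 * margin Q f p.1 ∂D = ∫ h, ∫ p, p.2 * f h p.1 ∂D ∂Q :=
        integral_mul_integral_eq_integral_integral_mul hf' measurable_snd
          (fun h p => abs_le_one_of_eq_one_or_eq_neg_one (hvals h p.1))
          (hlabels.mono fun p => abs_le_one_of_eq_one_or_eq_neg_one)
    _ = ∫ h, 1 - 2 * D.real {p | f h p.1 ≠ p.2} ∂Q := by simp_rw [hcorr]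
    _ = 1 - 2 * gibbsRisk D Q f :=
        integral_one_sub_two_mul (integrable_measureReal_prodMk_left
          (measurableSet_eq_fun hf' (measurable_snd.comp measurable_snd)).compl)

lemma integral_margin_sq (μ : Measure X) [IsProbabilityMeasure μ]
    (hf : Measurable (Function.uncurry f)) (hvals : ∀ h x, f h x = 1 ∨ f h x = -1) :
    ∫ x, margin Q f x ^ 2 ∂μ = 1 - 2 * ∫ h₁, ∫ h₂, μ.real {x | f h₁ x ≠ f h₂ x} ∂Q ∂Q := by
  have hfC : ∀ h x, |f h x| ≤ 1 := fun h x => abs_le_one_of_eq_one_or_eq_neg_one (hvals h x)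
  have hdis : MeasurableSet {q : (H × H) × X | f q.1.1 q.2 ≠ f q.1.2 q.2} :=
    (measurableSet_eq_fun (hf.comp ((measurable_fst.comp measurable_fst).prodMk measurable_snd))
      (hf.comp ((measurable_snd.comp measurable_fst).prodMk measurable_snd))).compl
  have hcorr : ∀ h₁, ∫ x, margin Q f x * f h₁ x ∂μ
      = 1 - 2 * ∫ h₂, μ.real {x | f h₁ x ≠ f h₂ x} ∂Q := fun h₁ => by
    have hf₁ : Measurable (f h₁) := hf.comp measurable_prodMk_left
    calc ∫ x, margin Q f x * f h₁ x ∂μ = ∫ x, f h₁ x * margin Q f x ∂μ := by simp_rw [mul_comm]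
      _ = ∫ h₂, ∫ x, f h₁ x * f h₂ x ∂μ ∂Q :=
          integral_mul_integral_eq_integral_integral_mul hf hf₁ hfC (ae_of_all _ (hfC h₁))
      _ = ∫ h₂, 1 - 2 * μ.real {x | f h₁ x ≠ f h₂ x} ∂Q :=
          integral_congr_ae (ae_of_all _ fun h₂ => integral_mul_eq_one_sub_two_measureReal_ne hf₁
            (hf.comp measurable_prodMk_left) (ae_of_all _ (hvals h₁)) (ae_of_all _ (hvals h₂)))
      _ = _ := integral_one_sub_two_mul (integrable_measureReal_prodMk_left
          (measurableSet_eq_fun (hf₁.comp measurable_snd) hf).compl)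
  calc ∫ x, margin Q f x ^ 2 ∂μ = ∫ x, margin Q f x * margin Q f x ∂μ := by simp_rw [sq]
    _ = ∫ h₁, ∫ x, margin Q f x * f h₁ x ∂μ ∂Q :=
        integral_mul_integral_eq_integral_integral_mul hf (measurable_margin Q hf) hfC
          (ae_of_all _ fun x => abs_integral_le_one (ae_of_all _ fun h => hfC h x))
    _ = ∫ h₁, 1 - 2 * ∫ h₂, μ.real {x | f h₁ x ≠ f h₂ x} ∂Q ∂Q := by simp_rw [hcorr]
    _ = _ := integral_one_sub_two_mul
        (integrable_measureReal_prodMk_left (μ := Q.prod Q) hdis).integral_prod_left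

lemma sq_integral_label_mul_margin_le (D : Measure (X × ℝ)) [IsProbabilityMeasure D]
    (hf : Measurable (Function.uncurry f)) (hvals : ∀ h x, f h x = 1 ∨ f h x = -1)
    (hlabels : ∀ᵐ p ∂D, p.2 = 1 ∨ p.2 = -1) :
    (∫ p, p.2 * margin Q f p.1 ∂D) ^ 2 ≤ ∫ x, margin Q f x ^ 2 ∂(D.map Prod.fst) := by
  have hM := measurable_margin Q hf
  have hsq : ∀ᵐ p ∂D, (p.2 * margin Q f p.1) ^ 2 = margin Q f p.1 ^ 2 := by
    filter_upwards [hlabels] with p hp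
    rcases hp with hp | hp <;> simp [hp]
  have hL2 : MemLp (fun p : X × ℝ => p.2 * margin Q f p.1) 2 D := by
    refine .of_bound (measurable_snd.mul (hM.comp measurable_fst)).aestronglyMeasurable 1 ?_
    filter_upwards [hlabels] with p hp
    rw [Real.norm_eq_abs, abs_mul]
    have hMC : |margin Q f p.1| ≤ 1 := abs_integral_le_one
      (ae_of_all _ fun h => abs_le_one_of_eq_one_or_eq_neg_one (hvals h p.1))
    rcases hp with hp | hp <;> simpa [hp] using hMC
  calc (∫ p, p.2 * margin Q f p.1 ∂D) ^ 2 ≤ ∫ p, (p.2 * margin Q f p.1) ^ 2 ∂D :=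
        sq_integral_le_integral_sq hL2
    _ = ∫ p, margin Q f p.1 ^ 2 ∂D := integral_congr_ae hsq
    _ = _ := (integral_map measurable_fst.aemeasurable (hM.pow_const 2).aestronglyMeasurable).symm

end Margin

/-- Margin identities: `E_{(x,y)~D}[y·M_Q(x)] = 1 − 2·r_D(Q)` and
`E_{x~D_X}[M_Q(x)²] = 1 − 2·d_D(Q)`, where `M_Q(x) = E_{h~Q}[h(x)]`; consequently
`d_D(Q) ≤ 1/2`, and `r_D(Q) < 1/2` implies `d_D(Q) < 1/2`. -/
theorem margin_moments
    (D : Measure (X × ℝ)) [IsProbabilityMeasure D]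
    (Q : Measure H) [IsProbabilityMeasure Q]
    (f : H → X → ℝ)
    (hf : Measurable fun p : H × X => f p.1 p.2)
    (hvals : ∀ h x, f h x = 1 ∨ f h x = -1)
    (hlabels : ∀ᵐ p ∂D, p.2 = 1 ∨ p.2 = -1) :
    (∫ p, p.2 * ∫ h, f h p.1 ∂Q ∂D) = 1 - 2 * gibbsRisk D Q f ∧
    (∫ x, (∫ h, f h x ∂Q) ^ 2 ∂(D.map Prod.fst)) = 1 - 2 * disagreement D Q f ∧
    disagreement D Q f ≤ 1 / 2 ∧
    (gibbsRisk D Q f < 1 / 2 → disagreement D Q f < 1 / 2) := by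
  have : IsProbabilityMeasure (D.map Prod.fst) :=
    Measure.isProbabilityMeasure_map measurable_fst.aemeasurable
  have hfirst := integral_label_mul_margin Q D hf hvals hlabels
  have hsecond : ∫ x, margin Q f x ^ 2 ∂(D.map Prod.fst) = 1 - 2 * disagreement D Q f :=
    integral_margin_sq Q (D.map Prod.fst) hf hvals
  have hjensen := sq_integral_label_mul_margin_le Q D hf hvals hlabels
  have hsq_nonneg : 0 ≤ ∫ x, margin Q f x ^ 2 ∂(D.map Prod.fst) :=
    integral_nonneg fun x => sq_nonneg (margin Q f x)
  refine ⟨hfirst, hsecond, by linarith, fun hr => ?_⟩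
  rw [hfirst, hsecond] at hjensen
  nlinarith
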